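/- (Theorem 3.3, combined bound.) Under the hypotheses of the previous statement — κ̂, κ* Markov kernels on X; μ̂ invariant for κ̂; μ* invariant for κ*; μ_b a probability measure on X; G a nonempty class of measurable g with |g| ≤ G_max; Φg bounded by F satisfying Φg = g + κ̂Φg − ∫g dμ̂ pointwise; e_g := κ̂Φg − κ*Φg; Ψg bounded measurable satisfying Ψg = e_g + κ*Ψg − ∫ e_g dμ* pointwise; KL(κ*(x)‖κ̂(x)) < ∞ for μ_b-a.e. x with x ↦ √(2·KL(κ*(x)‖κ̂(x))) μ_b-integrable — it holds that sup_{g ∈ G} | ∫ g dμ_b − ∫ g dμ* | ≤ sup_{g ∈ G} | ∫ Φg dμ_b − ∫ (κ̂ Φg)(x) dμ_b(x) | + F · ∫ √(2 · KL(κ*(x)‖κ̂(x))) dμ_b(x) + sup_{g ∈ G} | ∫ Ψg dμ_b − ∫ (κ* Ψg)(x) dμ_b(x) |. -/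

import Mathlib

/-!
Subtracting the Poisson equation `Φg = g + κ̂ Φg - ∫ g dμ̂` shows that, for every probability
measure `ν`, `∫ g dν` is the Bellman residual `∫ Φg dν - ∫ κ̂ Φg dν` plus a constant independent
of `ν`. At `ν = μ*`, invariance of `μ*` under `κ*` turns this residual into `-∫ e_g dμ*`, and the
Poisson equation for `Ψg` rewrites `∫ e_g dμ*` as `∫ e_g dμ_b` minus the residual of `Ψg` for `κ*`
under `μ_b`. What is left is Pinsker's inequality `|e_g x| ≤ F √(2 KL(κ* x ‖ κ̂ x))`, which follows
from `3 (x - 1)² ≤ (2x + 4) (x log x + 1 - x)` and Cauchy–Schwarz against the weight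
`(2ρ + 4) / 3`, whose integral is `2` when `∫ ρ = 1`.
-/

open MeasureTheory ProbabilityTheory Classical
open scoped ENNReal

/-- The Kullback–Leibler divergence `KL(P‖Q)`: equal to `∫ log (dP/dQ) dP` when `P ≪ Q`
and this integral makes sense, and `+∞` otherwise. -/
noncomputable def KLdiv {S : Type*} [MeasurableSpace S] (P Q : Measure S) : ℝ≥0∞ :=
  if P ≪ Q ∧ Integrable (fun s => Real.log ((P.rnDeriv Q s).toReal)) P then
    ENNReal.ofReal (∫ s, Real.log ((P.rnDeriv Q s).toReal) ∂P)
  else ⊤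

open Real Set InformationTheory

lemma monotoneOn_add_one_mul_log_sub :
    MonotoneOn (fun x : ℝ => (x + 1) * log x - 2 * (x - 1)) (Ioi 0) := by
  have hderiv : ∀ x ∈ Ioi (0 : ℝ),
      HasDerivAt (fun x : ℝ => (x + 1) * log x - 2 * (x - 1)) (log x + x⁻¹ - 1) x := by
    intro x hx
    have hx : x ≠ 0 := ne_of_gt hx
    refine ((((hasDerivAt_id' x).add_const 1).mul (hasDerivAt_log hx)).sub
      (((hasDerivAt_id' x).sub_const 1).const_mul 2)).congr_deriv ?_
    field_simp
    ring
  refine monotoneOn_of_hasDerivWithinAt_nonneg (convex_Ioi 0)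
    (fun x hx => (hderiv x hx).continuousAt.continuousWithinAt)
    (fun x hx => (hderiv x (interior_subset hx)).hasDerivWithinAt) fun x hx => ?_
  rw [interior_Ioi] at hx
  linarith [one_sub_inv_le_log_of_pos (mem_Ioi.mp hx)]

lemma three_mul_sq_sub_one_le_mul_klFun {x : ℝ} (hx : 0 ≤ x) :
    3 * (x - 1) ^ 2 ≤ (2 * x + 4) * klFun x := by
  set h : ℝ → ℝ := fun x => (2 * x + 4) * klFun x - 3 * (x - 1) ^ 2
  have hderiv : ∀ y ≠ 0, HasDerivAt h (4 * ((y + 1) * log y - 2 * (y - 1))) y := by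
    intro y hy
    refine ((((hasDerivAt_id' y).const_mul 2).add_const 4).mul (hasDerivAt_klFun hy) |>.sub
      ((((hasDerivAt_id' y).sub_const 1).pow 2).const_mul 3)).congr_deriv ?_
    rw [klFun_apply]
    ring
  have hsign := monotoneOn_add_one_mul_log_sub
  have hone : (1 : ℝ) ∈ Ioi 0 := mem_Ioi.mpr zero_lt_one
  have hmin : IsMinOn h (Ici 0) 1 := by
    refine isMinOn_Ici_of_deriv (by fun_prop) (by fun_prop)
      (fun y hy => (hderiv y hy.1.ne').differentiableAt.differentiableWithinAt)
      (fun y hy => (hderiv y (zero_lt_one.trans hy).ne').differentiableAt.differentiableWithinAt)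
      (fun y hy => ?_) (fun y hy => ?_)
    · rw [(hderiv y hy.1.ne').deriv]
      have := hsign hy.1 hone hy.2.le
      norm_num at this
      linarith
    · rw [(hderiv y (zero_lt_one.trans hy).ne').deriv]
      have := hsign hone (mem_Ioi.mpr (zero_lt_one.trans hy)) (le_of_lt hy)
      norm_num at this
      linarith
  have : h 1 ≤ h x := hmin (mem_Ici.mpr hx)
  simp only [h, klFun_one] at this
  linarith

lemma memLp_two_sqrt {S : Type*} [MeasurableSpace S] {Q : Measure S} {f : S → ℝ}
    (hf : Integrable f Q) (hf₀ : ∀ s, 0 ≤ f s) : MemLp (fun s => √(f s)) 2 Q := by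
  refine (memLp_two_iff_integrable_sq
    (continuous_sqrt.comp_aestronglyMeasurable hf.aestronglyMeasurable)).mpr ?_
  simpa only [sq_sqrt (hf₀ _)] using hf

lemma integral_abs_sub_one_le_sqrt_two_mul_integral_klFun {S : Type*} [MeasurableSpace S]
    {Q : Measure S} [IsProbabilityMeasure Q] {ρ : S → ℝ} (hρ : ∀ s, 0 ≤ ρ s)
    (hρ_int : Integrable ρ Q) (hρ_one : ∫ s, ρ s ∂Q = 1)
    (hkl : Integrable (fun s => klFun (ρ s)) Q) :
    ∫ s, |ρ s - 1| ∂Q ≤ √(2 * ∫ s, klFun (ρ s) ∂Q) := by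
  set w : S → ℝ := fun s => (2 * ρ s + 4) / 3
  have hw_int : Integrable w Q := ((hρ_int.const_mul 2).add (integrable_const 4)).div_const 3
  have hw_one : ∫ s, w s ∂Q = 2 := by
    simp only [w, integral_div, integral_add (hρ_int.const_mul 2) (integrable_const _),
      integral_const_mul, hρ_one, integral_const, probReal_univ, smul_eq_mul]
    norm_num
  have hw₀ : ∀ s, 0 ≤ w s := fun s => div_nonneg (by linarith [hρ s]) zero_le_three
  have hkl_mem := memLp_two_sqrt hkl fun s => klFun_nonneg (hρ s)
  have hw_mem := memLp_two_sqrt hw_int hw₀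
  have hpt : ∀ s, |ρ s - 1| ≤ √(klFun (ρ s)) * √(w s) := by
    intro s
    rw [← sqrt_mul (klFun_nonneg (hρ s)), ← sqrt_sq_eq_abs]
    refine sqrt_le_sqrt ?_
    have := three_mul_sq_sub_one_le_mul_klFun (hρ s)
    simp only [w]
    linarith
  calc ∫ s, |ρ s - 1| ∂Q ≤ ∫ s, √(klFun (ρ s)) * √(w s) ∂Q :=
        integral_mono (hρ_int.sub (integrable_const 1)).abs (hkl_mem.integrable_mul hw_mem) hpt
    _ ≤ (∫ s, √(klFun (ρ s)) ^ (2 : ℝ) ∂Q) ^ (1 / (2 : ℝ))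
          * (∫ s, √(w s) ^ (2 : ℝ) ∂Q) ^ (1 / (2 : ℝ)) :=
        integral_mul_le_Lp_mul_Lq_of_nonneg .two_two (ae_of_all _ fun _ => sqrt_nonneg _)
          (ae_of_all _ fun _ => sqrt_nonneg _) (by simpa using hkl_mem) (by simpa using hw_mem)
    _ = √(2 * ∫ s, klFun (ρ s) ∂Q) := by
        simp only [rpow_two, sq_sqrt (klFun_nonneg (hρ _)), sq_sqrt (hw₀ _), hw_one,
          ← sqrt_eq_rpow]
        rw [← sqrt_mul' _ zero_le_two, mul_comm]

lemma KLdiv_eq_klDiv {S : Type*} [MeasurableSpace S] (P Q : Measure S) [IsProbabilityMeasure P]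
    [IsProbabilityMeasure Q] : KLdiv P Q = klDiv P Q := by
  unfold KLdiv
  split_ifs with h
  · rw [klDiv_of_ac_of_integrable h.1 h.2]
    simp [llr_def]
  · exact (klDiv_eq_top_iff.mpr fun hac hint => h ⟨hac, hint⟩).symm

lemma abs_integral_sub_integral_le_mul_sqrt_klDiv {S : Type*} [MeasurableSpace S]
    {P Q : Measure S} [IsProbabilityMeasure P] [IsProbabilityMeasure Q] (hPQ : klDiv P Q ≠ ∞)
    {f : S → ℝ} (hf : Measurable f) {F : ℝ} (hF : 0 ≤ F) (hfF : ∀ s, |f s| ≤ F) :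
    |∫ s, f s ∂Q - ∫ s, f s ∂P| ≤ F * √(2 * (klDiv P Q).toReal) := by
  obtain ⟨hac, hllr⟩ := klDiv_ne_top_iff.mp hPQ
  set ρ : S → ℝ := fun s => (P.rnDeriv Q s).toReal
  have hρ_int : Integrable ρ Q := Measure.integrable_toReal_rnDeriv
  have hf_int : ∀ (ν : Measure S) [IsProbabilityMeasure ν], Integrable f ν := fun ν _ =>
    .of_bound hf.aestronglyMeasurable F (ae_of_all _ hfF)
  have hρf_int : Integrable (fun s => ρ s * f s) Q :=
    (integrable_rnDeriv_smul_iff hac).mpr (hf_int P)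
  have hchange : ∫ s, f s ∂P = ∫ s, ρ s * f s ∂Q := (integral_rnDeriv_smul hac).symm
  calc |∫ s, f s ∂Q - ∫ s, f s ∂P| = |∫ s, (1 - ρ s) * f s ∂Q| := by
        rw [hchange, ← integral_sub (hf_int Q) hρf_int]
        simp only [sub_mul, one_mul]
    _ ≤ ∫ s, F * |ρ s - 1| ∂Q := by
        refine norm_integral_le_of_norm_le (f := fun s => (1 - ρ s) * f s)
          ((hρ_int.sub (integrable_const 1)).abs.const_mul F) (ae_of_all _ fun s => ?_)
        rw [norm_mul, Real.norm_eq_abs, Real.norm_eq_abs, abs_sub_comm, mul_comm]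
        exact mul_le_mul_of_nonneg_right (hfF s) (abs_nonneg _)
    _ ≤ F * √(2 * (klDiv P Q).toReal) := by
        rw [integral_const_mul, toReal_klDiv_eq_integral_klFun hac]
        refine mul_le_mul_of_nonneg_left
          (integral_abs_sub_one_le_sqrt_two_mul_integral_klFun (fun _ => ENNReal.toReal_nonneg)
            hρ_int ?_ ((integrable_klFun_rnDeriv_iff hac).mpr hllr)) hF
        simp [ρ, Measure.integral_toReal_rnDeriv hac]

section Kernel

variable {X : Type*} [MeasurableSpace X]

lemma abs_integral_le_of_abs_le {μ : Measure X} [IsProbabilityMeasure μ] {f : X → ℝ} {C : ℝ}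
    (hC : ∀ x, |f x| ≤ C) : |∫ x, f x ∂μ| ≤ C := by
  simpa using norm_integral_le_of_norm_le_const (μ := μ) (f := f) (ae_of_all _ hC)

lemma abs_integral_sub_integral_le {μ ν : Measure X} [IsProbabilityMeasure μ]
    [IsProbabilityMeasure ν] {f : X → ℝ} {C : ℝ} (hC : ∀ x, |f x| ≤ C) :
    |∫ x, f x ∂μ - ∫ x, f x ∂ν| ≤ 2 * C := by
  linarith [abs_sub (∫ x, f x ∂μ) (∫ x, f x ∂ν), abs_integral_le_of_abs_le (μ := μ) hC,
    abs_integral_le_of_abs_le (μ := ν) hC]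

lemma integral_integral_eq_of_invariant {κ : Kernel X X} {μ : Measure X}
    (hμ : κ.Invariant μ) {f : X → ℝ} (hf : Integrable f μ) :
    ∫ x, ∫ y, f y ∂κ x ∂μ = ∫ x, f x ∂μ := by
  have hcomp : ∫ y, f y ∂(κ ∘ₘ μ) = ∫ x, ∫ y, f y ∂κ x ∂μ := by
    rw [Measure.comp_eq_comp_const_apply, Kernel.integral_comp]
    · simp
    · rwa [← Measure.comp_eq_comp_const_apply, hμ.def]
  rw [← hcomp, hμ.def]

noncomputable def bellmanResidual (κ : Kernel X X) (ν : Measure X) (h : X → ℝ) : ℝ :=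
  ∫ x, h x ∂ν - ∫ x, ∫ y, h y ∂κ x ∂ν

variable {κ η : Kernel X X} [IsMarkovKernel κ] [IsMarkovKernel η]

lemma abs_integral_integral_sub_le_mul_integral_sqrt_KLdiv {ν : Measure X} {f : X → ℝ}
    (hf : Measurable f) {F : ℝ} (hF : 0 ≤ F) (hfF : ∀ x, |f x| ≤ F)
    (h_kl_fin : ∀ᵐ x ∂ν, KLdiv (η x) (κ x) < ⊤)
    (h_kl_int : Integrable (fun x => √(2 * (KLdiv (η x) (κ x)).toReal)) ν) :
    |∫ x, (∫ y, f y ∂κ x - ∫ y, f y ∂η x) ∂ν|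
      ≤ F * ∫ x, √(2 * (KLdiv (η x) (κ x)).toReal) ∂ν := by
  rw [← integral_const_mul]
  refine norm_integral_le_of_norm_le (f := fun x => ∫ y, f y ∂κ x - ∫ y, f y ∂η x)
    (h_kl_int.const_mul F) ?_
  filter_upwards [h_kl_fin] with x hx
  rw [KLdiv_eq_klDiv] at hx ⊢
  exact abs_integral_sub_integral_le_mul_sqrt_klDiv hx.ne hf hF hfF

variable {μ ν : Measure X} [IsProbabilityMeasure μ] [IsProbabilityMeasure ν]

lemma abs_bellmanResidual_le {h : X → ℝ} {C : ℝ} (hC : ∀ x, |h x| ≤ C) :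
    |bellmanResidual κ ν h| ≤ 2 * C := by
  rw [bellmanResidual]
  linarith [abs_sub (∫ x, h x ∂ν) (∫ x, ∫ y, h y ∂κ x ∂ν), abs_integral_le_of_abs_le (μ := ν) hC,
    abs_integral_le_of_abs_le (μ := ν) fun x => abs_integral_le_of_abs_le (μ := κ x) hC]

lemma integral_eq_bellmanResidual_add {h u : X → ℝ} {c C : ℝ} (hh : Measurable h)
    (hC : ∀ x, |h x| ≤ C) (hpoisson : ∀ x, h x = u x + ∫ y, h y ∂κ x - c) :
    ∫ x, u x ∂ν = bellmanResidual κ ν h + c := by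
  have hu : ∀ x, u x = h x - ∫ y, h y ∂κ x + c := fun x => by linarith [hpoisson x]
  have hh_int : Integrable h ν := .of_bound hh.aestronglyMeasurable C (ae_of_all _ hC)
  have hκh_int : Integrable (fun x => ∫ y, h y ∂κ x) ν :=
    .of_bound (hh.stronglyMeasurable.integral_kernel).aestronglyMeasurable C
      (ae_of_all _ fun x => abs_integral_le_of_abs_le hC)
  rw [integral_congr_ae (ae_of_all _ hu),
    integral_add (f := fun x => h x - ∫ y, h y ∂κ x) (hh_int.sub hκh_int) (integrable_const c),
    integral_sub hh_int hκh_int]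
  simp [bellmanResidual]

lemma abs_bellmanResidual_le_of_poisson {h u : X → ℝ} {C B : ℝ} (hh : Measurable h)
    (hC : ∀ x, |h x| ≤ C) (huB : ∀ x, |u x| ≤ B)
    (hpoisson : ∀ x, h x = u x + ∫ y, h y ∂κ x - ∫ z, u z ∂μ) :
    |bellmanResidual κ ν h| ≤ 2 * B := by
  have := integral_eq_bellmanResidual_add (ν := ν) hh hC hpoisson
  rw [show bellmanResidual κ ν h = ∫ x, u x ∂ν - ∫ z, u z ∂μ by linarith]
  exact abs_integral_sub_integral_le huB

lemma bellmanResidual_eq_neg_integral_of_invariant (hμ : η.Invariant μ) {h : X → ℝ}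
    (hh : Measurable h) {C : ℝ} (hC : ∀ x, |h x| ≤ C) :
    bellmanResidual κ μ h = -∫ x, (∫ y, h y ∂κ x - ∫ y, h y ∂η x) ∂μ := by
  have hbdd : ∀ (ρ : Kernel X X) [IsMarkovKernel ρ], Integrable (fun x => ∫ y, h y ∂ρ x) μ :=
    fun ρ _ => .of_bound (hh.stronglyMeasurable.integral_kernel).aestronglyMeasurable C
      (ae_of_all _ fun x => abs_integral_le_of_abs_le hC)
  rw [bellmanResidual, integral_sub (hbdd κ) (hbdd η), integral_integral_eq_of_invariant hμ
    (.of_bound hh.aestronglyMeasurable C (ae_of_all _ hC))]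
  ring

lemma abs_integral_sub_integral_le_of_poisson (hμ : η.Invariant μ) {g φ ψ : X → ℝ}
    {c F C : ℝ} (hφ : Measurable φ) (hF : 0 ≤ F) (hφF : ∀ x, |φ x| ≤ F) (hψ : Measurable ψ)
    (hψC : ∀ x, |ψ x| ≤ C) (hφ_poisson : ∀ x, φ x = g x + ∫ y, φ y ∂κ x - c)
    (hψ_poisson : ∀ x, ψ x = (∫ y, φ y ∂κ x - ∫ y, φ y ∂η x) + ∫ y, ψ y ∂η x
      - ∫ z, (∫ y, φ y ∂κ z - ∫ y, φ y ∂η z) ∂μ)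
    (h_kl_fin : ∀ᵐ x ∂ν, KLdiv (η x) (κ x) < ⊤)
    (h_kl_int : Integrable (fun x => √(2 * (KLdiv (η x) (κ x)).toReal)) ν) :
    |∫ x, g x ∂ν - ∫ x, g x ∂μ|
      ≤ |bellmanResidual κ ν φ| + F * ∫ x, √(2 * (KLdiv (η x) (κ x)).toReal) ∂ν
        + |bellmanResidual η ν ψ| := by
  set e : X → ℝ := fun x => ∫ y, φ y ∂κ x - ∫ y, φ y ∂η x
  have hdecomp : ∫ x, g x ∂ν - ∫ x, g x ∂μ
      = bellmanResidual κ ν φ + ∫ x, e x ∂ν - bellmanResidual η ν ψ := by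
    rw [integral_eq_bellmanResidual_add (ν := ν) hφ hφF hφ_poisson,
      integral_eq_bellmanResidual_add (ν := μ) hφ hφF hφ_poisson,
      bellmanResidual_eq_neg_integral_of_invariant hμ hφ hφF,
      integral_eq_bellmanResidual_add (ν := ν) hψ hψC hψ_poisson]
    ring
  rw [hdecomp]
  have hmodel := abs_integral_integral_sub_le_mul_integral_sqrt_KLdiv hφ hF hφF h_kl_fin h_kl_int
  linarith [abs_sub (bellmanResidual κ ν φ + ∫ x, e x ∂ν) (bellmanResidual η ν ψ),
    abs_add_le (bellmanResidual κ ν φ) (∫ x, e x ∂ν)]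

end Kernel

theorem ipm_behavior_le_residual_add_klTerm_add_residual_general
    {X : Type*} [MeasurableSpace X]
    (κhat κstar : Kernel X X) [IsMarkovKernel κhat] [IsMarkovKernel κstar]
    (μhat : Measure X)
    (μstar : Measure X) [IsProbabilityMeasure μstar]
    (h_inv_star : Kernel.Invariant κstar μstar)
    (μb : Measure X) [IsProbabilityMeasure μb]
    (G : Set (X → ℝ))
    (Φ : (X → ℝ) → (X → ℝ))
    (hΦ_meas : ∀ g ∈ G, Measurable (Φ g))
    (F : ℝ) (hF : 0 ≤ F) (hΦ_bdd : ∀ g ∈ G, ∀ x, |Φ g x| ≤ F)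
    (hΦ_bellman : ∀ g ∈ G, ∀ x,
      Φ g x = g x + (∫ x', Φ g x' ∂(κhat x)) - ∫ z, g z ∂μhat)
    (Ψ : (X → ℝ) → (X → ℝ))
    (hΨ_meas : ∀ g ∈ G, Measurable (Ψ g))
    (hΨ_bdd : ∀ g ∈ G, ∃ C : ℝ, ∀ x, |Ψ g x| ≤ C)
    (hΨ_bellman : ∀ g ∈ G, ∀ x,
      Ψ g x = ((∫ x', Φ g x' ∂(κhat x)) - ∫ x', Φ g x' ∂(κstar x))
        + (∫ x', Ψ g x' ∂(κstar x))
        - ∫ z, ((∫ x', Φ g x' ∂(κhat z)) - ∫ x', Φ g x' ∂(κstar z)) ∂μstar)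
    (h_kl_fin : ∀ᵐ x ∂μb, KLdiv (κstar x) (κhat x) < ⊤)
    (h_kl_int : Integrable
      (fun x => Real.sqrt (2 * (KLdiv (κstar x) (κhat x)).toReal)) μb) :
    (⨆ g : G, |(∫ x, (g : X → ℝ) x ∂μb) - ∫ x, (g : X → ℝ) x ∂μstar|)
      ≤ (⨆ g : G, |(∫ x, Φ g x ∂μb) - ∫ x, ∫ x', Φ (g : X → ℝ) x' ∂(κhat x) ∂μb|)
        + F * (∫ x, Real.sqrt (2 * (KLdiv (κstar x) (κhat x)).toReal) ∂μb)
        + ⨆ g : G, |(∫ x, Ψ g x ∂μb) - ∫ x, ∫ x', Ψ (g : X → ℝ) x' ∂(κstar x) ∂μb| := by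
  have hbddΦ : BddAbove (range fun g : G => |bellmanResidual κhat μb (Φ g)|) :=
    ⟨2 * F, by rintro _ ⟨g, rfl⟩; exact abs_bellmanResidual_le (hΦ_bdd g g.2)⟩
  have hbddΨ : BddAbove (range fun g : G => |bellmanResidual κstar μb (Ψ g)|) := by
    refine ⟨2 * (2 * F), ?_⟩
    rintro _ ⟨g, rfl⟩
    obtain ⟨C, hC⟩ := hΨ_bdd g g.2
    exact abs_bellmanResidual_le_of_poisson (hΨ_meas g g.2) hC
      (fun x => abs_integral_sub_integral_le (hΦ_bdd g g.2)) (hΨ_bellman g g.2)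
  refine Real.iSup_le (fun g => ?_) ?_
  · obtain ⟨C, hC⟩ := hΨ_bdd g g.2
    calc _ ≤ |bellmanResidual κhat μb (Φ g)|
          + F * ∫ x, √(2 * (KLdiv (κstar x) (κhat x)).toReal) ∂μb
          + |bellmanResidual κstar μb (Ψ g)| :=
          abs_integral_sub_integral_le_of_poisson h_inv_star (hΦ_meas g g.2) hF (hΦ_bdd g g.2)
            (hΨ_meas g g.2) hC (hΦ_bellman g g.2) (hΨ_bellman g g.2) h_kl_fin h_kl_int
      _ ≤ _ := by gcongr; exacts [le_ciSup hbddΦ g, le_ciSup hbddΨ g]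
  · exact add_nonneg (add_nonneg (Real.iSup_nonneg fun _ => abs_nonneg _)
      (mul_nonneg hF (integral_nonneg fun _ => sqrt_nonneg _)))
      (Real.iSup_nonneg fun _ => abs_nonneg _)

/-- Theorem 3.3 (combined bound): the IPM `D_G(μ_b, μ*)` between the behavior occupancy
measure and the occupancy measure of the evaluated policy under the true dynamics is
bounded by the Bellman-residual regularizer, the expected square-root-KL model error, and
the auxiliary residual term. -/
theorem ipm_behavior_le_residual_add_klTerm_add_residual
    {X : Type*} [MeasurableSpace X]
    (κhat κstar : Kernel X X) [IsMarkovKernel κhat] [IsMarkovKernel κstar]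
    (μhat : Measure X) [IsProbabilityMeasure μhat]
    (h_inv_hat : Kernel.Invariant κhat μhat)
    (μstar : Measure X) [IsProbabilityMeasure μstar]
    (h_inv_star : Kernel.Invariant κstar μstar)
    (μb : Measure X) [IsProbabilityMeasure μb]
    (G : Set (X → ℝ)) (hG_ne : G.Nonempty)
    (hG_meas : ∀ g ∈ G, Measurable g)
    (Gmax : ℝ) (hG_bdd : ∀ g ∈ G, ∀ x, |g x| ≤ Gmax)
    (Φ : (X → ℝ) → (X → ℝ))
    (hΦ_meas : ∀ g ∈ G, Measurable (Φ g))
    (F : ℝ) (hF : 0 ≤ F) (hΦ_bdd : ∀ g ∈ G, ∀ x, |Φ g x| ≤ F)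
    (hΦ_bellman : ∀ g ∈ G, ∀ x,
      Φ g x = g x + (∫ x', Φ g x' ∂(κhat x)) - ∫ z, g z ∂μhat)
    (Ψ : (X → ℝ) → (X → ℝ))
    (hΨ_meas : ∀ g ∈ G, Measurable (Ψ g))
    (hΨ_bdd : ∀ g ∈ G, ∃ C : ℝ, ∀ x, |Ψ g x| ≤ C)
    (hΨ_bellman : ∀ g ∈ G, ∀ x,
      Ψ g x = ((∫ x', Φ g x' ∂(κhat x)) - ∫ x', Φ g x' ∂(κstar x))
        + (∫ x', Ψ g x' ∂(κstar x))
        - ∫ z, ((∫ x', Φ g x' ∂(κhat z)) - ∫ x', Φ g x' ∂(κstar z)) ∂μstar)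
    (h_kl_fin : ∀ᵐ x ∂μb, KLdiv (κstar x) (κhat x) < ⊤)
    (h_kl_int : Integrable
      (fun x => Real.sqrt (2 * (KLdiv (κstar x) (κhat x)).toReal)) μb) :
    (⨆ g : G, |(∫ x, (g : X → ℝ) x ∂μb) - ∫ x, (g : X → ℝ) x ∂μstar|)
      ≤ (⨆ g : G, |(∫ x, Φ g x ∂μb) - ∫ x, ∫ x', Φ (g : X → ℝ) x' ∂(κhat x) ∂μb|)
        + F * (∫ x, Real.sqrt (2 * (KLdiv (κstar x) (κhat x)).toReal) ∂μb)
        + ⨆ g : G, |(∫ x, Ψ g x ∂μb) - ∫ x, ∫ x', Ψ (g : X → ℝ) x' ∂(κstar x) ∂μb| :=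
  ipm_behavior_le_residual_add_klTerm_add_residual_general κhat κstar μhat μstar h_inv_star μb G Φ
    hΦ_meas F hF hΦ_bdd hΦ_bellman Ψ hΨ_meas hΨ_bdd hΨ_bellman h_kl_fin h_kl_int
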